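/- Let w ∈ S_n be a 312-free permutation. Let I = {i_1 < … < i_t} and J = {j_1 < … < j_s} be subsets of {1,…,n} with s ≤ t that form a two-column semi-standard Young tableau, i.e. i_r ≤ j_r for all 1 ≤ r ≤ s. Suppose I ≤ sort({w_1,…,w_t}) and J ≤ sort({w_1,…,w_s}). Then there exist permutations v_1, v_2 ∈ S_n with v_1 ≤ v_2 ≤ w in the Bruhat order such that {v_1(1),…,v_1(t)} = I and {v_2(1),…,v_2(s)} = J (i.e., the tableau [I J] has a defining chain whose last permutation is at most w, so it is standard for the Schubert variety X(w)). -/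

import Mathlib

open MvPolynomial

/-- Index type for the Plücker variables `P_J`: nonempty proper subsets of `{1,…,n}`
(encoded as `Fin n`, where `i : Fin n` stands for the value `i+1`). -/
abbrev PIdx (n : ℕ) := {J : Finset (Fin n) // J.Nonempty ∧ J ≠ Finset.univ}

/-- The transposition (1 2) acting on (1-based) row indices. -/
def swap12 (r : ℕ) : ℕ := if r = 1 then 2 else if r = 2 then 1 else r

/-- The image of the Plücker variable `P_J` under the monomial map `φ_ℓ` associated to the
block diagonal matching field `B_ℓ`: writing `J = {j_1 < … < j_k}` (as 1-based values),
it is `sgn(σ)·x_{σ(1),j_1}⋯x_{σ(k),j_k}` where `σ = id` if `|J| = 1` or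
`|J ∩ {1,…,ℓ}| ≥ 2`, and `σ = (1 2)` otherwise. Variables `x_{i,j}` are indexed by
pairs of 1-based natural numbers. -/
noncomputable def phiVal (K : Type*) [CommRing K] (n ℓ : ℕ) (J : Finset (Fin n)) :
    MvPolynomial (ℕ × ℕ) K :=
  let l : List ℕ := (J.sort (· ≤ ·)).map (fun j => (j : ℕ) + 1)
  if J.card = 1 ∨ 2 ≤ (J.filter (fun j : Fin n => (j : ℕ) + 1 ≤ ℓ)).card then
    ((List.range l.length).map
      (fun r => (X (r + 1, l.getD r 0) : MvPolynomial (ℕ × ℕ) K))).prod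
  else
    - ((List.range l.length).map
      (fun r => (X (swap12 (r + 1), l.getD r 0) : MvPolynomial (ℕ × ℕ) K))).prod

/-- The monomial map `φ_ℓ : K[P_J] → K[x_{i,j}]`. -/
noncomputable def phiMap (K : Type*) [CommRing K] (n ℓ : ℕ) :
    MvPolynomial (PIdx n) K →ₐ[K] MvPolynomial (ℕ × ℕ) K :=
  aeval (fun J => phiVal K n ℓ J.1)

/-- The matching field ideal `F_{n,ℓ} = ker φ_ℓ`. -/
noncomputable def Fnl (K : Type*) [CommRing K] (n ℓ : ℕ) :
    Ideal (MvPolynomial (PIdx n) K) :=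
  RingHom.ker (phiMap K n ℓ)

/-- Componentwise comparison `A ≤ B` of two finsets via their increasing enumerations. -/
def finsetLE {n : ℕ} (A B : Finset (Fin n)) : Prop :=
  List.Forall₂ (· ≤ ·) (A.sort (· ≤ ·)) (B.sort (· ≤ ·))

/-- The set `{w_1, …, w_k}` of the first `k` values of the one-line notation of `w`. -/
def initSet {n : ℕ} (w : Equiv.Perm (Fin n)) (k : ℕ) : Finset (Fin n) :=
  (Finset.univ.filter (fun i : Fin n => (i : ℕ) < k)).image w

/-- `S_w`: the set of subsets `J` with `J ≰ {w_1,…,w_{|J|}}`. -/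
def Sw {n : ℕ} (w : Equiv.Perm (Fin n)) : Set (Finset (Fin n)) :=
  {J | ¬ finsetLE J (initSet w J.card)}

/-- Index type for the Plücker variables that do not vanish on the Schubert variety `X(w)`. -/
abbrev RIdx (n : ℕ) (w : Equiv.Perm (Fin n)) := {J : PIdx n // J.1 ∉ Sw w}

open Classical in
/-- The projection `π_w` sending `P_J ↦ 0` for `J ∈ S_w` and `P_J ↦ P_J` otherwise. -/
noncomputable def piw (K : Type*) [CommRing K] {n : ℕ} (w : Equiv.Perm (Fin n)) :
    MvPolynomial (PIdx n) K →ₐ[K] MvPolynomial (RIdx n w) K :=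
  aeval (fun J => if h : J.1 ∈ Sw w then 0 else X (⟨J, h⟩ : RIdx n w))

/-- The restricted matching field ideal `F_{n,ℓ,w} = π_w(F_{n,ℓ})`. -/
noncomputable def Fnlw (K : Type*) [CommRing K] (n ℓ : ℕ) (w : Equiv.Perm (Fin n)) :
    Ideal (MvPolynomial (RIdx n w) K) :=
  Ideal.map (piw K w) (Fnl K n ℓ)

/-- An ideal of a polynomial ring is monomial-free if it contains no (nonzero) monomial. -/
def MonomialFree {σ K : Type*} [CommSemiring K] (I : Ideal (MvPolynomial σ K)) : Prop :=
  ∀ m : σ →₀ ℕ, (monomial m (1 : K)) ∉ I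

/-- The adjacent transposition `s_{i+1} = (i+1, i+2)` (1-based), i.e. the swap of the
0-based positions `i` and `i+1` of `Fin n`. -/
def adjT (n i : ℕ) : Equiv.Perm (Fin n) :=
  if h : i + 1 < n then Equiv.swap ⟨i, Nat.lt_of_succ_lt h⟩ ⟨i + 1, h⟩ else 1

/-- `Z_n`: permutations that are products of adjacent transpositions with pairwise
distance at least 2 between the indices. -/
def Zset (n : ℕ) : Set (Equiv.Perm (Fin n)) :=
  {w | ∃ l : List ℕ, (∀ i ∈ l, i + 1 < n) ∧
        l.Pairwise (fun i j => i + 2 ≤ j ∨ j + 2 ≤ i) ∧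
        w = (l.map (adjT n)).prod}

/-- `oneLine w i = w_i` : the `i`-th entry (1-based, with 1-based values) of the
one-line notation of `w`. -/
def oneLine {n : ℕ} (w : Equiv.Perm (Fin n)) (i : ℕ) : ℕ :=
  if h : i - 1 < n then (w ⟨i - 1, h⟩ : ℕ) + 1 else 0

/-- The (1-based) position `t` with `w_t = n`. -/
def posOfTop {n : ℕ} (w : Equiv.Perm (Fin n)) : ℕ :=
  if h : 0 < n then ((w.symm ⟨n - 1, by omega⟩ : ℕ) + 1) else 0

/-- `deleteTop w u` holds iff `u = ul(w)` is obtained from `w` by deleting the entry `n`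
from its one-line notation. -/
def deleteTop {n : ℕ} (w : Equiv.Perm (Fin n)) (u : Equiv.Perm (Fin (n - 1))) : Prop :=
  ∀ i, 1 ≤ i → i ≤ n - 1 →
    oneLine u i = if i < posOfTop w then oneLine w i else oneLine w (i + 1)

/-- The descending property: writing `w_t = n`, one has `w_t > w_{t+1} > … > w_n`. -/
def descendingProp {n : ℕ} (w : Equiv.Perm (Fin n)) : Prop :=
  ∀ i, posOfTop w ≤ i → i < n → oneLine w (i + 1) < oneLine w i

/-- `T_{n,ℓ}`: the set of permutations `w` for which `F_{n,ℓ,w}` is nonzero and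
monomial-free. -/
def Tset (K : Type*) [Field K] (n ℓ : ℕ) : Set (Equiv.Perm (Fin n)) :=
  {w | Fnlw K n ℓ w ≠ ⊥ ∧ MonomialFree (Fnlw K n ℓ w)}

/-- The one-line notation of `w` as a list of 1-based values. -/
def olList {n : ℕ} (w : Equiv.Perm (Fin n)) : List ℕ :=
  (List.finRange n).map (fun i => (w i : ℕ) + 1)

/-- A list of naturals is 312-free if it has no subsequence of type 312. -/
def List312Free (l : List ℕ) : Prop :=
  ¬ ∃ i j k : ℕ, i < j ∧ j < k ∧ k < l.length ∧
      l.getD j 0 < l.getD k 0 ∧ l.getD k 0 < l.getD i 0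

/-- The decreasing list `[a, a-1, …, 1]`. -/
def descTo1 (a : ℕ) : List ℕ := (List.range a).reverse.map (· + 1)

/-- The set `P_ℓ ⊆ S_n`. -/
def Pset (n ℓ : ℕ) : Set (Equiv.Perm (Fin n)) :=
  if ℓ = n then {w | List312Free (olList w)}
  else
    {w | (¬ List312Free (olList w) →
            oneLine w 2 = ℓ ∧ oneLine w 2 < oneLine w 1 ∧
            List312Free ((olList w).erase ℓ)) ∧
         (∀ m, 3 ≤ m → m ≤ n →
            (olList w).filter (fun v => v ≤ m) = (m - 1) :: m :: descTo1 (m - 2) →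
            oneLine w 1 < oneLine w 2 ∧ oneLine w 2 ≤ ℓ ∧
            (olList w).filter (fun v => v ≤ oneLine w 2) =
              oneLine w 1 :: oneLine w 2 ::
                ((descTo1 (oneLine w 2 - 1)).filter (fun v => v ≠ oneLine w 1)))}

/-- The set `A_1`. -/
def A1set (n : ℕ) : Set (Equiv.Perm (Fin n)) :=
  {w | (∃ u : Equiv.Perm (Fin (n - 1)), deleteTop w u ∧ u ∈ Zset (n - 1)) ∧
       oneLine w n = n - 2 ∧
       ({oneLine w (n - 2), oneLine w (n - 1)} : Set ℕ) = {n - 1, n}}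

/-- The set `A_2` (with `ul(w) ∈ T_{n-1,ℓ'}`). -/
def A2set (K : Type*) [Field K] (n ℓ' : ℕ) : Set (Equiv.Perm (Fin n)) :=
  {w | (∃ u : Equiv.Perm (Fin (n - 1)),
          deleteTop w u ∧ u ∈ Tset K (n - 1) ℓ' ∧ descendingProp u) ∧
       (∀ s t, 1 ≤ s → s ≤ n → 1 ≤ t → t ≤ n →
          oneLine w s = n - 1 → oneLine w t = n → s - 1 ≤ t)}

/-- Bruhat order via the tableau criterion. -/
def bruhatLE {n : ℕ} (u v : Equiv.Perm (Fin n)) : Prop :=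
  ∀ r, r ≤ n → finsetLE (initSet u r) (initSet v r)


/-!
Write `N_v(X) = X.cardGE v` for the number of elements of `X` that are `≥ v`, so that `A ≤ B`
means `#A = #B` and `N_v(A) ≤ N_v(B)` for all `v`. A permutation is determined by the flag of
its initial segments, so it suffices to extend `I` and `J` to complete flags `T_I`, `T_J` with
`T_I(r) ≤ T_J(r) ≤ {w_1, …, w_r}` for every `r`. For a set `A` let `T_A(r) = chainThrough w A r`
be the `r` smallest elements of `A` when `r < #A`, and `A` together with the `r - #A` largest
elements of `{w_1, …, w_r} \ A` when `r ≥ #A`.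

The two-column condition says that below any `v` the set `J` has at most as many elements as
`I`, which gives `T_I(r) ≤ T_J(r)` by counting. The 312-freeness of `w` enters in
`T_A(r) ≤ {w_1, …, w_r}`: if some `b ∈ A` with `b ≥ v` is not among `w_1, …, w_r`, then
`A ≤ {w_1, …, w_#A}` provides an earlier value `x > b`, and every `w_i` with `#A ≤ i < r` must
exceed `b`, since otherwise `x, w_i, b` is a 312 pattern. So `N_v` of the initial segments
grows by exactly `r - #A` from `#A` to `r`, while `T_A(r)` has only `r - #A` elements outside `A`.
-/

open Finset

namespace List

theorem Forall₂.countP_le_countP {α β : Type*} {R : α → β → Prop} {p : α → Bool}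
    {q : β → Bool} (hpq : ∀ a b, R a b → p a → q b) {l₁ : List α} {l₂ : List β}
    (h : Forall₂ R l₁ l₂) : l₁.countP p ≤ l₂.countP q := by
  induction h with
  | nil => rfl
  | @cons a b _ _ hab _ ih =>
    have := hpq a b hab
    rw [countP_cons, countP_cons]
    split_ifs <;> simp_all
    omega

theorem forall₂_le_of_countP_le {α : Type*} [LinearOrder α] {l₁ l₂ : List α}
    (h₁ : l₁.Pairwise (· < ·)) (h₂ : l₂.Pairwise (· < ·)) (hlen : l₁.length = l₂.length)
    (hcount : ∀ v, l₁.countP (v ≤ ·) ≤ l₂.countP (v ≤ ·)) : Forall₂ (· ≤ ·) l₁ l₂ := by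
  induction l₁ generalizing l₂ with
  | nil => cases l₂ with
    | nil => exact .nil
    | cons => simp at hlen
  | cons a l₁ ih =>
    obtain _ | ⟨b, l₂⟩ := l₂
    · simp at hlen
    have hlen' : l₁.length = l₂.length := by simpa using hlen
    have hab : a ≤ b := by
      by_contra! hba
      have h := hcount a
      have hall : (a :: l₁).countP (a ≤ ·) = l₁.length + 1 := by
        rw [countP_eq_length.2 fun x hx => ?_, length_cons]
        rcases mem_cons.1 hx with rfl | hx
        · simp
        · simpa using (rel_of_pairwise_cons h₁ hx).le
      rw [hall, countP_cons_of_neg (by simpa using hba)] at h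
      have := countP_le_length (p := (a ≤ ·)) (l := l₂)
      omega
    refine Forall₂.cons hab (ih h₁.of_cons h₂.of_cons hlen' fun v => ?_)
    by_cases hvb : v ≤ b
    · rw [(countP_eq_length (l := l₂)).2 fun x hx => ?_]
      · exact hlen' ▸ countP_le_length
      · simpa using hvb.trans (rel_of_pairwise_cons h₂ hx).le
    · have h := hcount v
      simp only [countP_cons, hvb, decide_false, Bool.false_eq_true, if_false, add_zero] at h
      omega

end List

namespace Finset

theorem card_sdiff_le_card_sdiff_add {α : Type*} [DecidableEq α] (X Y A : Finset α) :
    #(Y \ A) ≤ #(X \ A) + #(Y \ X) := by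
  refine (card_le_card fun y hy => ?_).trans (card_union_le _ _)
  by_cases hyX : y ∈ X <;> simp_all

variable {α : Type*} [LinearOrder α]

def cardGE (X : Finset α) (v : α) : ℕ := #{x ∈ X | v ≤ x}

def cardLT (X : Finset α) (v : α) : ℕ := #{x ∈ X | x < v}

def lowest (X : Finset α) (r : ℕ) : Finset α := {x ∈ X | X.cardLT x < r}

def highest (X : Finset α) (k : ℕ) : Finset α := {x ∈ X | X.cardGE x ≤ k}

variable {X Y : Finset α} {v x y : α}

theorem cardGE_add_cardLT (X : Finset α) (v : α) : X.cardGE v + X.cardLT v = #X := by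
  rw [cardGE, cardLT, ← card_filter_add_card_filter_not (s := X) (p := fun x => v ≤ x)]
  simp only [not_le]

theorem cardGE_mono (h : X ⊆ Y) (v : α) : X.cardGE v ≤ Y.cardGE v :=
  card_le_card (filter_subset_filter _ h)

theorem cardLT_mono (h : X ⊆ Y) (v : α) : X.cardLT v ≤ Y.cardLT v :=
  card_le_card (filter_subset_filter _ h)

theorem cardGE_union_of_disjoint (h : Disjoint X Y) (v : α) :
    (X ∪ Y).cardGE v = X.cardGE v + Y.cardGE v := by
  rw [cardGE, filter_union, card_union_of_disjoint (disjoint_filter_filter h)]; rfl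

theorem cardGE_union_le (X Y : Finset α) (v : α) :
    (X ∪ Y).cardGE v ≤ X.cardGE v + Y.cardGE v := by
  rw [cardGE, filter_union]; exact card_union_le _ _

theorem cardLT_lt_cardLT (hx : x ∈ X) (hxy : x < y) : X.cardLT x < X.cardLT y := by
  refine card_lt_card ((ssubset_iff_of_subset ?_).2 ⟨x, ?_, ?_⟩)
  · exact monotone_filter_right X fun z _ hz => hz.trans hxy
  · simp [hx, hxy]
  · simp

theorem cardLT_lt_card (hx : x ∈ X) : X.cardLT x < #X :=
  card_lt_card ((ssubset_iff_of_subset (filter_subset _ _)).2 ⟨x, hx, by simp⟩)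

theorem le_iff_cardLT_le (hx : x ∈ X) : v ≤ x ↔ X.cardLT v ≤ X.cardLT x :=
  ⟨fun h => card_le_card (monotone_filter_right X fun _ _ hz => hz.trans_le h),
    fun h => not_lt.1 fun hxv => h.not_gt (cardLT_lt_cardLT hx hxv)⟩

theorem injOn_cardLT (X : Finset α) : Set.InjOn X.cardLT X := fun _ hx _ hy hxy =>
  le_antisymm ((le_iff_cardLT_le hy).2 hxy.le) ((le_iff_cardLT_le hx).2 hxy.ge)

theorem image_cardLT (X : Finset α) : X.image X.cardLT = range #X := by
  refine eq_of_subset_of_card_le (fun j hj => ?_) ?_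
  · obtain ⟨x, hx, rfl⟩ := mem_image.1 hj
    exact mem_range.2 (cardLT_lt_card hx)
  · rw [card_range, card_image_of_injOn X.injOn_cardLT]

theorem card_filter_cardLT_mem_Ico (X : Finset α) (a b : ℕ) :
    #{x ∈ X | X.cardLT x ∈ Ico a b} = min b #X - a := by
  rw [← card_image_of_injOn (X.injOn_cardLT.mono (filter_subset _ _)),
    ← filter_image (p := (· ∈ Ico a b)), image_cardLT, ← Nat.card_Ico a (min b #X)]
  congr 1
  ext j
  simp only [mem_filter, mem_range, mem_Ico, lt_min_iff]
  omega

theorem lowest_subset (X : Finset α) (r : ℕ) : X.lowest r ⊆ X := filter_subset _ _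

theorem highest_subset (X : Finset α) (k : ℕ) : X.highest k ⊆ X := filter_subset _ _

theorem lowest_mono (X : Finset α) {r r' : ℕ} (h : r ≤ r') : X.lowest r ⊆ X.lowest r' :=
  monotone_filter_right X fun _ _ hx => hx.trans_le h

theorem card_lowest (X : Finset α) (r : ℕ) : #(X.lowest r) = min r #X := by
  rw [lowest, ← Nat.sub_zero (min r #X), ← card_filter_cardLT_mem_Ico]
  simp only [mem_Ico, zero_le, true_and]

theorem cardGE_lowest (X : Finset α) (r : ℕ) (v : α) :
    (X.lowest r).cardGE v = min r #X - X.cardLT v := by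
  rw [cardGE, lowest, filter_filter, ← card_filter_cardLT_mem_Ico]
  congr 1
  refine filter_congr fun x hx => ?_
  rw [le_iff_cardLT_le hx, mem_Ico, and_comm]

theorem card_highest (X : Finset α) (k : ℕ) : #(X.highest k) = min k #X := by
  rw [show min k #X = min #X #X - (#X - k) by omega, ← card_filter_cardLT_mem_Ico, highest]
  congr 1
  refine filter_congr fun x hx => ?_
  have := X.cardGE_add_cardLT x
  have := cardLT_lt_card hx
  rw [mem_Ico]
  omega

theorem cardGE_highest (X : Finset α) (k : ℕ) (v : α) :
    (X.highest k).cardGE v = min k (X.cardGE v) := by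
  have hv := X.cardGE_add_cardLT v
  rw [show min k (X.cardGE v) = min #X #X - max (#X - k) (X.cardLT v) by omega,
    ← card_filter_cardLT_mem_Ico, cardGE, highest, filter_filter]
  congr 1
  refine filter_congr fun x hx => ?_
  have := X.cardGE_add_cardLT x
  have := cardLT_lt_card hx
  rw [le_iff_cardLT_le hx, mem_Ico, max_le_iff]
  omega

theorem highest_zero (X : Finset α) : X.highest 0 = ∅ := by
  rw [← card_eq_zero, card_highest, zero_min]

theorem highest_subset_highest_succ (hXY : X ⊆ Y) (hY : #Y ≤ #X + 1) (k : ℕ) :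
    X.highest k ⊆ Y.highest (k + 1) := by
  intro x hx
  obtain ⟨hxX, hxk⟩ := mem_filter.1 hx
  refine mem_filter.2 ⟨hXY hxX, ?_⟩
  have hsplit : Y.cardGE x ≤ X.cardGE x + (Y \ X).cardGE x := by
    rw [← cardGE_union_of_disjoint disjoint_sdiff, union_sdiff_of_subset hXY]
  have := cardGE_add_cardLT (Y \ X) x
  have := card_sdiff_of_subset hXY
  omega

theorem disjoint_highest_sdiff (A X : Finset α) (k : ℕ) :
    Disjoint A ((X \ A).highest k) :=
  disjoint_sdiff.mono_right (highest_subset _ _)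

theorem countP_sort (X : Finset α) (p : α → Prop) [DecidablePred p] :
    (X.sort (· ≤ ·)).countP (p ·) = #{x ∈ X | p x} := by
  rw [← (sort_nodup X _).card_eq_countP, sort_toFinset]

theorem cardLT_le_of_forall₂_take {I J : Finset α}
    (h : List.Forall₂ (· ≤ ·) ((I.sort (· ≤ ·)).take #J) (J.sort (· ≤ ·))) (v : α) :
    J.cardLT v ≤ I.cardLT v := by
  have hle := (List.Forall₂.flip (R := fun a b => b ≤ a) h).countP_le_countP
    (p := (· < v)) (q := (· < v)) fun _ _ hab hb =>
      decide_eq_true (hab.trans_lt (of_decide_eq_true hb))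
  calc J.cardLT v = (J.sort (· ≤ ·)).countP (· < v) := (countP_sort J (· < v)).symm
    _ ≤ ((I.sort (· ≤ ·)).take #J).countP (· < v) := hle
    _ ≤ (I.sort (· ≤ ·)).countP (· < v) := (List.take_sublist _ _).countP_le
    _ = I.cardLT v := countP_sort I (· < v)

end Finset

theorem finsetLE_iff_cardGE_le {n : ℕ} {A B : Finset (Fin n)} :
    finsetLE A B ↔ #A = #B ∧ ∀ v, A.cardGE v ≤ B.cardGE v := by
  refine ⟨fun h => ⟨?_, fun v => ?_⟩, fun ⟨hcard, h⟩ => ?_⟩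
  · simpa using h.length_eq
  · rw [cardGE, cardGE, ← countP_sort, ← countP_sort]
    exact h.countP_le_countP fun _ _ hab hva => decide_eq_true ((of_decide_eq_true hva).trans hab)
  · refine List.forall₂_le_of_countP_le (sortedLT_sort A).pairwise (sortedLT_sort B).pairwise
      (by simpa using hcard) fun v => ?_
    rw [countP_sort, countP_sort]
    exact h v

section InitialSegments

variable {n : ℕ}

theorem mem_initSet {w : Equiv.Perm (Fin n)} {r : ℕ} {b : Fin n} :
    b ∈ initSet w r ↔ (w.symm b : ℕ) < r := by
  simp only [initSet, mem_image, mem_filter, mem_univ, true_and]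
  exact ⟨fun ⟨i, hi, hib⟩ => hib ▸ by simpa using hi,
    fun h => ⟨w.symm b, h, w.apply_symm_apply b⟩⟩

theorem card_initSet (w : Equiv.Perm (Fin n)) {r : ℕ} (hr : r ≤ n) : #(initSet w r) = r := by
  rw [initSet, card_image_of_injective _ w.injective, Fin.card_filter_val_lt, min_eq_right hr]

theorem cardGE_initSet_add_cardLT (w : Equiv.Perm (Fin n)) {r : ℕ} (hr : r ≤ n) (v : Fin n) :
    (initSet w r).cardGE v + (initSet w r).cardLT v = r := by
  rw [cardGE_add_cardLT, card_initSet w hr]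

theorem initSet_mono (w : Equiv.Perm (Fin n)) {r r' : ℕ} (h : r ≤ r') :
    initSet w r ⊆ initSet w r' :=
  fun _ hb => mem_initSet.2 ((mem_initSet.1 hb).trans_le h)

theorem exists_perm_initSet_eq (C : ℕ → Finset (Fin n)) (hcard : ∀ r ≤ n, #(C r) = r)
    (hsucc : ∀ r < n, C r ⊆ C (r + 1)) :
    ∃ v : Equiv.Perm (Fin n), ∀ r ≤ n, initSet v r = C r := by
  have hmono : ∀ r r', r ≤ r' → r' ≤ n → C r ⊆ C r' := by
    intro r r' h
    induction r', h using Nat.le_induction with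
    | base => exact fun _ => subset_rfl
    | succ m _ ih => exact fun hm => (ih (by omega)).trans (hsucc m hm)
  have hnew (i : Fin n) : ∃ x, C (i + 1) \ C i = {x} := by
    refine card_eq_one.1 ?_
    rw [card_sdiff_of_subset (hsucc i i.2), hcard _ i.2, hcard _ i.2.le]
    omega
  choose g hg using hnew
  have hgmem (i : Fin n) : g i ∈ C (i + 1) ∧ g i ∉ C i :=
    mem_sdiff.1 (hg i ▸ mem_singleton_self _)
  have hinj : Function.Injective g := by
    intro i j hij
    by_contra hne
    wlog h : i < j generalizing i j
    · exact this hij.symm (Ne.symm hne) ((not_lt.1 h).lt_of_ne (Ne.symm hne))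
    exact (hgmem j).2 (hij ▸ hmono _ _ h j.2.le (hgmem i).1)
  refine ⟨Equiv.ofBijective g hinj.bijective_of_finite, fun r hr => ?_⟩
  refine eq_of_subset_of_card_le (fun x hx => ?_) (by rw [hcard r hr, card_initSet _ hr])
  set v := Equiv.ofBijective g hinj.bijective_of_finite
  have hxr := mem_initSet.1 hx
  rw [← v.apply_symm_apply x]
  exact hmono _ _ hxr hr (hgmem (v.symm x)).1

theorem bruhatLE_of_cardGE_le {u v : Equiv.Perm (Fin n)}
    (h : ∀ r ≤ n, ∀ x, (initSet u r).cardGE x ≤ (initSet v r).cardGE x) : bruhatLE u v :=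
  fun r hr => finsetLE_iff_cardGE_le.2 ⟨by rw [card_initSet _ hr, card_initSet _ hr], h r hr⟩

end InitialSegments

section Avoiding312

variable {n : ℕ} {w : Equiv.Perm (Fin n)}

theorem List312Free.not_lt_of_lt_of_lt (hw : List312Free (olList w)) {i j k : Fin n}
    (hij : i < j) (hjk : j < k) (hw_jk : w j < w k) : ¬ w k < w i := by
  have getD_olList (i : Fin n) : (olList w).getD i 0 = w i + 1 := by
    simp [olList]
  refine fun hw_ki => hw ⟨i, j, k, hij, hjk, by simp [olList], ?_, ?_⟩ <;>
    simp only [getD_olList, add_lt_add_iff_right, Fin.val_fin_lt] <;> assumption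

theorem List312Free.lt_of_mem_initSet_sdiff (hw : List312Free (olList w)) {s r : ℕ}
    {x b y : Fin n} (hx : x ∈ initSet w s) (hbx : b < x) (hb : b ∉ initSet w r)
    (hy : y ∈ initSet w r \ initSet w s) : b < y := by
  obtain ⟨hyr, hys⟩ := mem_sdiff.1 hy
  have hyb : y ≠ b := fun h => hb (h ▸ hyr)
  rw [mem_initSet] at hx hb hyr hys
  by_contra! hby
  refine hw.not_lt_of_lt_of_lt (i := w.symm x) (j := w.symm y) (k := w.symm b)
    (Fin.lt_def.2 (by omega)) (Fin.lt_def.2 (by omega)) ?_ ?_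
  · simpa using hby.lt_of_ne hyb
  · simpa using hbx

theorem List312Free.cardGE_initSet_eq_add (hw : List312Free (olList w)) {s r : ℕ}
    (hsr : s ≤ r) (hrn : r ≤ n) {x b v : Fin n} (hx : x ∈ initSet w s) (hbx : b < x)
    (hb : b ∉ initSet w r) (hvb : v ≤ b) :
    (initSet w r).cardGE v = (initSet w s).cardGE v + (r - s) := by
  have hsub := initSet_mono w hsr
  have hnew : (initSet w r \ initSet w s).cardGE v = r - s := by
    rw [cardGE,
      filter_true_of_mem fun y hy => hvb.trans (hw.lt_of_mem_initSet_sdiff hx hbx hb hy).le,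
      card_sdiff_of_subset hsub, card_initSet w hrn, card_initSet w (hsr.trans hrn)]
  rw [← hnew, ← cardGE_union_of_disjoint disjoint_sdiff, union_sdiff_of_subset hsub]

end Avoiding312

section Chain

variable {n : ℕ} (w : Equiv.Perm (Fin n)) (A : Finset (Fin n)) {r : ℕ}

def chainThrough (r : ℕ) : Finset (Fin n) :=
  if r < #A then A.lowest r else A ∪ (initSet w r \ A).highest (r - #A)

theorem chainThrough_card_self : chainThrough w A #A = A := by
  rw [chainThrough, if_neg (lt_irrefl _), Nat.sub_self, highest_zero, union_empty]

theorem card_chainThrough (hr : r ≤ n) : #(chainThrough w A r) = r := by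
  unfold chainThrough
  split_ifs with h
  · rw [card_lowest]
    omega
  · rw [card_union_of_disjoint (disjoint_highest_sdiff _ _ _), card_highest]
    have := le_card_sdiff A (initSet w r)
    rw [card_initSet w hr] at this
    omega

theorem chainThrough_subset_succ (hr : r < n) :
    chainThrough w A r ⊆ chainThrough w A (r + 1) := by
  unfold chainThrough
  split_ifs with h₁ h₂ h₂
  · exact lowest_mono A (Nat.le_succ r)
  · exact (lowest_subset A r).trans subset_union_left
  · omega
  have hsub : initSet w r ⊆ initSet w (r + 1) := initSet_mono w (Nat.le_succ r)
  have hcard : #(initSet w (r + 1) \ A) ≤ #(initSet w r \ A) + 1 := by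
    have := card_sdiff_le_card_sdiff_add (initSet w r) (initSet w (r + 1)) A
    rwa [card_sdiff_of_subset hsub, card_initSet w hr, card_initSet w hr.le,
      Nat.add_sub_cancel_left (m := 1)] at this
  rw [show r + 1 - #A = r - #A + 1 by omega]
  exact union_subset_union_right
    (highest_subset_highest_succ (sdiff_subset_sdiff hsub subset_rfl) hcard _)

theorem exists_perm_initSet_eq_chainThrough :
    ∃ v : Equiv.Perm (Fin n), ∀ r ≤ n, initSet v r = chainThrough w A r :=
  exists_perm_initSet_eq _ (fun _ => card_chainThrough w A) (fun _ => chainThrough_subset_succ w A)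

variable {w A}

theorem cardGE_chainThrough_of_lt (h : r < #A) (v : Fin n) :
    (chainThrough w A r).cardGE v = r - A.cardLT v := by
  rw [chainThrough, if_pos h, cardGE_lowest, min_eq_left h.le]

theorem cardGE_chainThrough_of_le (h : #A ≤ r) (v : Fin n) :
    (chainThrough w A r).cardGE v = A.cardGE v + min (r - #A) ((initSet w r \ A).cardGE v) := by
  rw [chainThrough, if_neg h.not_gt, cardGE_union_of_disjoint (disjoint_highest_sdiff _ _ _),
    cardGE_highest]

theorem min_le_cardGE_chainThrough (h : #A ≤ r) (v : Fin n) :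
    min (A.cardGE v + (r - #A)) ((initSet w r).cardGE v) ≤ (chainThrough w A r).cardGE v := by
  have hsplit : (initSet w r).cardGE v ≤ A.cardGE v + (initSet w r \ A).cardGE v :=
    (cardGE_mono (subset_union_right.trans union_sdiff_self_eq_union.ge) v).trans
      (cardGE_union_le _ _ v)
  rw [cardGE_chainThrough_of_le h]
  omega

end Chain

section Dominance

variable {n : ℕ} {w : Equiv.Perm (Fin n)} {A : Finset (Fin n)} {r : ℕ}

theorem cardGE_chainThrough_le_initSet_of_le (hw : List312Free (olList w))
    (hA : ∀ v, A.cardGE v ≤ (initSet w #A).cardGE v) (h : #A ≤ r) (hr : r ≤ n) (v : Fin n) :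
    (chainThrough w A r).cardGE v ≤ (initSet w r).cardGE v := by
  rw [cardGE_chainThrough_of_le h]
  by_cases hb : ∀ b ∈ A, v ≤ b → b ∈ initSet w r
  · have hAW : A.cardGE v ≤ (A ∩ initSet w r).cardGE v := card_le_card fun a ha => by
      obtain ⟨haA, hva⟩ := mem_filter.1 ha
      exact mem_filter.2 ⟨mem_inter.2 ⟨haA, hb a haA hva⟩, hva⟩
    have hW : (A ∩ initSet w r).cardGE v + (initSet w r \ A).cardGE v ≤
        (initSet w r).cardGE v := by
      rw [← cardGE_union_of_disjoint (disjoint_sdiff.mono_left inter_subset_left)]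
      exact cardGE_mono (union_subset inter_subset_right sdiff_subset) v
    have := min_le_right (r - #A) ((initSet w r \ A).cardGE v)
    omega
  · push Not at hb
    obtain ⟨b, hbA, hvb, hbr⟩ := hb
    -- Since `A ≤ {w_1, …, w_#A}`, some `x ≥ b` occurs among the first `#A` values.
    have hbA' : 0 < A.cardGE b := card_pos.2 ⟨b, mem_filter.2 ⟨hbA, le_rfl⟩⟩
    obtain ⟨x, hx⟩ := card_pos.1 (hbA'.trans_le (hA b))
    obtain ⟨hxA, hbx⟩ := mem_filter.1 hx
    have hbx' : b < x := hbx.lt_of_ne (by rintro rfl; exact hbr (initSet_mono w h hxA))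
    have := hw.cardGE_initSet_eq_add h hr hxA hbx' hbr hvb
    have := hA v
    have := min_le_left (r - #A) ((initSet w r \ A).cardGE v)
    omega

theorem cardGE_chainThrough_le_initSet (hw : List312Free (olList w))
    (hA : ∀ v, A.cardGE v ≤ (initSet w #A).cardGE v) (hr : r ≤ n) (v : Fin n) :
    (chainThrough w A r).cardGE v ≤ (initSet w r).cardGE v := by
  rcases le_or_gt #A r with h | h
  · exact cardGE_chainThrough_le_initSet_of_le hw hA h hr v
  have := cardGE_initSet_add_cardLT w hr v
  have := cardGE_initSet_add_cardLT w (by simpa using card_le_univ A) v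
  have := A.cardGE_add_cardLT v
  have := cardLT_mono (initSet_mono w h.le) v
  have := hA v
  rw [cardGE_chainThrough_of_lt h]
  omega

theorem cardGE_chainThrough_mono (hw : List312Free (olList w)) {I J : Finset (Fin n)}
    (hI : ∀ v, I.cardGE v ≤ (initSet w #I).cardGE v) (hJI : ∀ v, J.cardLT v ≤ I.cardLT v)
    (hst : #J ≤ #I) (hr : r ≤ n) (v : Fin n) :
    (chainThrough w I r).cardGE v ≤ (chainThrough w J r).cardGE v := by
  have := I.cardGE_add_cardLT v
  have := J.cardGE_add_cardLT v
  have := hJI v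
  rcases lt_or_ge r #J with hrs | hrs
  · rw [cardGE_chainThrough_of_lt hrs, cardGE_chainThrough_of_lt (hrs.trans_le hst)]
    omega
  have hJr := min_le_cardGE_chainThrough (w := w) hrs v
  rcases lt_or_ge r #I with hrt | hrt
  · have := cardGE_initSet_add_cardLT w hr v
    have := cardGE_initSet_add_cardLT w (by simpa using card_le_univ I) v
    have := cardLT_mono (initSet_mono w hrt.le) v
    have := hI v
    rw [cardGE_chainThrough_of_lt hrt]
    omega
  · have := cardGE_chainThrough_le_initSet_of_le hw hI hrt hr v
    have := cardGE_chainThrough_of_le (w := w) hrt v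
    have := min_le_left (r - #I) ((initSet w r \ I).cardGE v)
    omega

end Dominance

theorem stmt19 (n : ℕ) (w : Equiv.Perm (Fin n)) (hw : List312Free (olList w))
    (I J : Finset (Fin n)) (hst : J.card ≤ I.card)
    (hSSYT : List.Forall₂ (· ≤ ·) ((I.sort (· ≤ ·)).take J.card) (J.sort (· ≤ ·)))
    (hI : finsetLE I (initSet w I.card)) (hJ : finsetLE J (initSet w J.card)) :
    ∃ v₁ v₂ : Equiv.Perm (Fin n), bruhatLE v₁ v₂ ∧ bruhatLE v₂ w ∧
      initSet v₁ I.card = I ∧ initSet v₂ J.card = J := by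
  have hIw := (finsetLE_iff_cardGE_le.1 hI).2
  have hJw := (finsetLE_iff_cardGE_le.1 hJ).2
  obtain ⟨v₁, hv₁⟩ := exists_perm_initSet_eq_chainThrough w I
  obtain ⟨v₂, hv₂⟩ := exists_perm_initSet_eq_chainThrough w J
  refine ⟨v₁, v₂, bruhatLE_of_cardGE_le fun r hr x => ?_,
    bruhatLE_of_cardGE_le fun r hr x => ?_, ?_, ?_⟩
  · rw [hv₁ r hr, hv₂ r hr]
    exact cardGE_chainThrough_mono hw hIw (cardLT_le_of_forall₂_take hSSYT) hst hr x
  · rw [hv₂ r hr]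
    exact cardGE_chainThrough_le_initSet hw hJw hr x
  · rw [hv₁ _ (by simpa using card_le_univ I), chainThrough_card_self]
  · rw [hv₂ _ (by simpa using card_le_univ J), chainThrough_card_self]
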